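/- arXiv:1810.01521 — 2 statements merged into one kernel-verified Lean document; each statement's English description precedes it below -/
import Mathlib

section
/- Under hypotheses (C1)–(C4), let 𝓡 = {t = |t|e^{iθ} ∈ ℂ : 0<θ<π/r and 0<|t|≤τ(θ)}. For t = |t|e^{iθ} ∈ 𝓡 one has Im(P(t)/(t^r Q(t))) = 0 if and only if t = τ(θ)e^{iθ}. -/
open Complex Finset

noncomputable section

/-- The monic real polynomial `∏ (X - τ k)` over indices `-pm < k ≤ pp`. -/
noncomputable def prodPoly (pm pp : ℕ) (τ : ℤ → ℝ) : Polynomial ℝ :=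
  ∏ k ∈ Finset.Ioc (-(pm : ℤ)) (pp : ℤ), (Polynomial.X - Polynomial.C (τ k))

/-- Evaluation of a real polynomial at a complex number. -/
noncomputable def cval (p : Polynomial ℝ) (t : ℂ) : ℂ :=
  Polynomial.aeval t p

/-- `R(t) = r - t P'(t)/P(t) + t Q'(t)/Q(t)`. -/
noncomputable def Rfun (r pm pp qm qp : ℕ) (τ γ : ℤ → ℝ) (t : ℂ) : ℂ :=
  (r : ℂ)
    - t * cval (Polynomial.derivative (prodPoly pm pp τ)) t / cval (prodPoly pm pp τ) t
    + t * cval (Polynomial.derivative (prodPoly qm qp γ)) t / cval (prodPoly qm qp γ) t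

/-- The continuous extension of `P(t) * R(t)`, namely
`r P(t) - t P'(t) + t P(t) Q'(t)/Q(t)`. -/
noncomputable def PRfun (r pm pp qm qp : ℕ) (τ γ : ℤ → ℝ) (t : ℂ) : ℂ :=
  (r : ℂ) * cval (prodPoly pm pp τ) t
    - t * cval (Polynomial.derivative (prodPoly pm pp τ)) t
    + t * cval (prodPoly pm pp τ) t * cval (Polynomial.derivative (prodPoly qm qp γ)) t
        / cval (prodPoly qm qp γ) t

/-- Number of zeros (with multiplicity) lying in `(0, x]`. -/
noncomputable def nPos (pm pp : ℕ) (τ : ℤ → ℝ) (x : ℝ) : ℕ :=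
  ((Finset.Ioc (-(pm : ℤ)) (pp : ℤ)).filter fun k => 0 < τ k ∧ τ k ≤ x).card

/-- Number of zeros (with multiplicity) lying in `[x, 0)`. -/
noncomputable def nNeg (pm pp : ℕ) (τ : ℤ → ℝ) (x : ℝ) : ℕ :=
  ((Finset.Ioc (-(pm : ℤ)) (pp : ℤ)).filter fun k => x ≤ τ k ∧ τ k < 0).card

/-- `Σ_k θ_k(t) - Σ_j η_j(t)` where `θ_k(t) = Arg (t - τ_k)` and `η_j(t) = Arg (t - γ_j)`. -/
noncomputable def angleSum (pm pp qm qp : ℕ) (τ γ : ℤ → ℝ) (t : ℂ) : ℝ :=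
  (∑ k ∈ Finset.Ioc (-(pm : ℤ)) (pp : ℤ), (t - (τ k : ℂ)).arg)
    - ∑ j ∈ Finset.Ioc (-(qm : ℤ)) (qp : ℤ), (t - (γ j : ℂ)).arg

/-- `z(θ) = -P(t)/(t^r Q(t))` evaluated at `t = tau(θ) e^{iθ}`. -/
noncomputable def zfun (r pm pp qm qp : ℕ) (τ γ : ℤ → ℝ) (tau : ℝ → ℝ) (θ : ℝ) : ℂ :=
  -(cval (prodPoly pm pp τ) ((tau θ : ℂ) * Complex.exp ((θ : ℂ) * Complex.I)))
    / (((tau θ : ℂ) * Complex.exp ((θ : ℂ) * Complex.I)) ^ r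
        * cval (prodPoly qm qp γ) ((tau θ : ℂ) * Complex.exp ((θ : ℂ) * Complex.I)))

/-- The denominator `P(t) + z t^r Q(t)`, viewed as a formal power series in `t` whose
coefficients are polynomials in `z`. -/
noncomputable def Dgen (r : ℕ) (P Q : Polynomial ℝ) : PowerSeries (Polynomial ℝ) :=
  ((P.map Polynomial.C
      + Polynomial.C Polynomial.X * Polynomial.X ^ r * Q.map Polynomial.C :
      Polynomial (Polynomial ℝ)) : PowerSeries (Polynomial ℝ))

/-- `H` is the sequence of polynomials generated by
`Σ_m H_m(z) t^m = 1/(P(t) + z t^r Q(t))` (Taylor expansion at `t = 0`). -/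
def IsGenSeq (r : ℕ) (P Q : Polynomial ℝ) (H : ℕ → Polynomial ℝ) : Prop :=
  PowerSeries.mk H * Dgen r P Q = 1



namespace Stmt10Aux

lemma sqrt_ratio_mono {y x1 x2 : ℝ} (hy : 0 < y) (h : x1 < x2) :
    x1 / Real.sqrt (x1 ^ 2 + y ^ 2) < x2 / Real.sqrt (x2 ^ 2 + y ^ 2) := by
  have h1 : 0 < Real.sqrt (x1 ^ 2 + y ^ 2) := Real.sqrt_pos.2 (by positivity)
  have h2 : 0 < Real.sqrt (x2 ^ 2 + y ^ 2) := Real.sqrt_pos.2 (by positivity)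
  have e1 : Real.sqrt (x1 ^ 2 + y ^ 2) ^ 2 = x1 ^ 2 + y ^ 2 := Real.sq_sqrt (by positivity)
  have e2 : Real.sqrt (x2 ^ 2 + y ^ 2) ^ 2 = x2 ^ 2 + y ^ 2 := Real.sq_sqrt (by positivity)
  rw [div_lt_div_iff₀ h1 h2]
  rcases le_or_gt 0 x1 with hx1 | hx1
  · -- both nonneg
    have hx2 : 0 < x2 := lt_of_le_of_lt hx1 h
    have hb : 0 < x2 * Real.sqrt (x1 ^ 2 + y ^ 2) := mul_pos hx2 h1
    have hsq : (x1 * Real.sqrt (x2 ^ 2 + y ^ 2)) ^ 2 < (x2 * Real.sqrt (x1 ^ 2 + y ^ 2)) ^ 2 := by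
      rw [mul_pow, mul_pow, e1, e2]
      nlinarith [mul_lt_mul_of_pos_right (show x1 ^ 2 < x2 ^ 2 by nlinarith) (mul_pos hy hy)]
    exact lt_of_pow_lt_pow_left₀ 2 hb.le hsq
  · rcases le_or_gt 0 x2 with hx2 | hx2
    · have h1' : x1 * Real.sqrt (x2 ^ 2 + y ^ 2) < 0 := mul_neg_of_neg_of_pos hx1 h2
      have h2' : 0 ≤ x2 * Real.sqrt (x1 ^ 2 + y ^ 2) := mul_nonneg hx2 h1.le
      linarith
    · -- both negative
      have ha : 0 ≤ -x1 * Real.sqrt (x2 ^ 2 + y ^ 2) :=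
        mul_nonneg (by linarith) h2.le
      have hsq : (-x2 * Real.sqrt (x1 ^ 2 + y ^ 2)) ^ 2 < (-x1 * Real.sqrt (x2 ^ 2 + y ^ 2)) ^ 2 := by
        rw [mul_pow, mul_pow, e1, e2]
        nlinarith [mul_lt_mul_of_pos_right (show x2 ^ 2 < x1 ^ 2 by nlinarith) (mul_pos hy hy)]
      have := lt_of_pow_lt_pow_left₀ 2 ha hsq
      linarith

lemma arg_lt_arg_of_re {z w : ℂ} (him : z.im = w.im) (hy : 0 < z.im) (hre : z.re < w.re) :
    w.arg < z.arg := by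
  have hz : z ≠ 0 := fun h => by simp [h] at hy
  have hw : w ≠ 0 := fun h => by rw [him, h] at hy; simp at hy
  have habs : ∀ u : ℂ, ‖u‖ = Real.sqrt (u.re ^ 2 + u.im ^ 2) := by
    intro u
    rw [Complex.norm_def, Complex.normSq_apply]; ring_nf
  have hmem : ∀ u : ℂ, 0 < u.im → u.arg ∈ Set.Icc 0 Real.pi := by
    intro u hu
    exact ⟨Complex.arg_nonneg_iff.2 hu.le, Complex.arg_le_pi u⟩
  have hcos : Real.cos z.arg < Real.cos w.arg := by
    rw [Complex.cos_arg hz, Complex.cos_arg hw, habs z, habs w, him]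
    exact sqrt_ratio_mono (him ▸ hy) hre
  by_contra hle
  push_neg at hle
  rcases eq_or_lt_of_le hle with he | hlt
  · rw [he] at hcos; exact lt_irrefl _ hcos
  · exact absurd (Real.strictAntiOn_cos (hmem z hy) (hmem w (him ▸ hy)) hlt) (by linarith)

lemma arg_le_arg_of_re {z w : ℂ} (him : z.im = w.im) (hy : 0 < z.im) (hre : z.re ≤ w.re) :
    w.arg ≤ z.arg := by
  rcases eq_or_lt_of_le hre with he | hlt
  · have : z = w := Complex.ext he him
    rw [this]
  · exact (arg_lt_arg_of_re him hy hlt).le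

lemma arg_pos_of_im {z : ℂ} (hy : 0 < z.im) : 0 < z.arg := by
  rcases eq_or_lt_of_le (Complex.arg_nonneg_iff.2 hy.le) with he | h
  · exfalso
    have := Complex.arg_eq_zero_iff.1 he.symm
    linarith [this.2]
  · exact h

lemma arg_lt_pi_of_im {z : ℂ} (hy : 0 < z.im) : z.arg < Real.pi := by
  rcases eq_or_lt_of_le (Complex.arg_le_pi z) with he | h
  · exfalso
    have := Complex.arg_eq_pi_iff.1 he
    linarith [this.2]
  · exact h

lemma arg_exp_I {φ : ℝ} (h1 : -Real.pi < φ) (h2 : φ ≤ Real.pi) :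
    (Complex.exp ((φ : ℂ) * Complex.I)).arg = φ := by
  rw [Complex.exp_mul_I]
  exact Complex.arg_cos_add_sin_mul_I ⟨h1, h2⟩


/-! ### Ray point lemmas -/

lemma ray_re (ρ θ a : ℝ) :
    ((ρ : ℂ) * Complex.exp ((θ : ℂ) * Complex.I) - (a : ℂ)).re = ρ * Real.cos θ - a := by
  rw [Complex.sub_re, Complex.re_ofReal_mul, Complex.exp_ofReal_mul_I_re, Complex.ofReal_re]

lemma ray_im (ρ θ a : ℝ) :
    ((ρ : ℂ) * Complex.exp ((θ : ℂ) * Complex.I) - (a : ℂ)).im = ρ * Real.sin θ := by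
  rw [Complex.sub_im, Complex.im_ofReal_mul, Complex.exp_ofReal_mul_I_im, Complex.ofReal_im,
    sub_zero]

lemma ray_im' (ρ θ : ℝ) : ((ρ : ℂ) * Complex.exp ((θ : ℂ) * Complex.I)).im = ρ * Real.sin θ := by
  rw [Complex.im_ofReal_mul, Complex.exp_ofReal_mul_I_im]

lemma ray_re' (ρ θ : ℝ) : ((ρ : ℂ) * Complex.exp ((θ : ℂ) * Complex.I)).re = ρ * Real.cos θ := by
  rw [Complex.re_ofReal_mul, Complex.exp_ofReal_mul_I_re]

lemma ray_arg {ρ θ : ℝ} (hρ : 0 < ρ) (h1 : -Real.pi < θ) (h2 : θ ≤ Real.pi) :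
    ((ρ : ℂ) * Complex.exp ((θ : ℂ) * Complex.I)).arg = θ := by
  rw [Complex.arg_real_mul _ hρ, arg_exp_I h1 h2]

section Ray

variable {ρ θ : ℝ}

lemma ray_sub_im_pos (hρ : 0 < ρ) (h0 : 0 < θ) (hπ : θ < Real.pi) (a : ℝ) :
    0 < ((ρ : ℂ) * Complex.exp ((θ : ℂ) * Complex.I) - (a : ℂ)).im := by
  rw [ray_im]
  exact mul_pos hρ (Real.sin_pos_of_pos_of_lt_pi h0 hπ)

lemma ray_sub_ne (hρ : 0 < ρ) (h0 : 0 < θ) (hπ : θ < Real.pi) (a : ℝ) :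
    (ρ : ℂ) * Complex.exp ((θ : ℂ) * Complex.I) - (a : ℂ) ≠ 0 := by
  intro h
  have := ray_sub_im_pos hρ h0 hπ (a := a)
  rw [h] at this
  simp at this

lemma arg_sub_le_of_le (hρ : 0 < ρ) (h0 : 0 < θ) (hπ : θ < Real.pi) {a b : ℝ} (hab : a ≤ b) :
    ((ρ : ℂ) * Complex.exp ((θ : ℂ) * Complex.I) - (a : ℂ)).arg
      ≤ ((ρ : ℂ) * Complex.exp ((θ : ℂ) * Complex.I) - (b : ℂ)).arg := by
  apply arg_le_arg_of_re
  · rw [ray_im, ray_im]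
  · exact ray_sub_im_pos hρ h0 hπ b
  · rw [ray_re, ray_re]; linarith

lemma arg_sub_lt_theta (hρ : 0 < ρ) (h0 : 0 < θ) (hπ : θ < Real.pi) {a : ℝ} (ha : a < 0) :
    ((ρ : ℂ) * Complex.exp ((θ : ℂ) * Complex.I) - (a : ℂ)).arg < θ := by
  have h := arg_lt_arg_of_re (z := (ρ : ℂ) * Complex.exp ((θ : ℂ) * Complex.I))
    (w := (ρ : ℂ) * Complex.exp ((θ : ℂ) * Complex.I) - (a : ℂ))
    (by rw [ray_im, ray_im'])
    (by rw [ray_im']; exact mul_pos hρ (Real.sin_pos_of_pos_of_lt_pi h0 hπ))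
    (by rw [ray_re, ray_re']; linarith)
  rwa [ray_arg hρ (by linarith [Real.pi_pos]) hπ.le] at h

lemma theta_lt_arg_sub (hρ : 0 < ρ) (h0 : 0 < θ) (hπ : θ < Real.pi) {a : ℝ} (ha : 0 < a) :
    θ < ((ρ : ℂ) * Complex.exp ((θ : ℂ) * Complex.I) - (a : ℂ)).arg := by
  have h := arg_lt_arg_of_re (z := (ρ : ℂ) * Complex.exp ((θ : ℂ) * Complex.I) - (a : ℂ))
    (w := (ρ : ℂ) * Complex.exp ((θ : ℂ) * Complex.I))
    (by rw [ray_im, ray_im']) (ray_sub_im_pos hρ h0 hπ a)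
    (by rw [ray_re, ray_re']; linarith)
  rwa [ray_arg hρ (by linarith [Real.pi_pos]) hπ.le] at h

lemma arg_sub_pos (hρ : 0 < ρ) (h0 : 0 < θ) (hπ : θ < Real.pi) (a : ℝ) :
    0 < ((ρ : ℂ) * Complex.exp ((θ : ℂ) * Complex.I) - (a : ℂ)).arg :=
  arg_pos_of_im (ray_sub_im_pos hρ h0 hπ a)

lemma arg_sub_lt_pi (hρ : 0 < ρ) (h0 : 0 < θ) (hπ : θ < Real.pi) (a : ℝ) :
    ((ρ : ℂ) * Complex.exp ((θ : ℂ) * Complex.I) - (a : ℂ)).arg < Real.pi :=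
  arg_lt_pi_of_im (ray_sub_im_pos hρ h0 hπ a)

lemma exp_sub_one_eq (h0 : 0 < θ) (hπ : θ < Real.pi) :
    Complex.exp ((θ : ℂ) * Complex.I) - 1
      = ((2 * Real.sin (θ / 2) : ℝ) : ℂ)
          * Complex.exp ((((θ + Real.pi) / 2 : ℝ) : ℂ) * Complex.I) := by
  have hc2 : Real.cos ((θ + Real.pi) / 2) = -Real.sin (θ / 2) := by
    rw [show (θ + Real.pi) / 2 = θ / 2 + Real.pi / 2 by ring, Real.cos_add_pi_div_two]
  have hs2 : Real.sin ((θ + Real.pi) / 2) = Real.cos (θ / 2) := by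
    rw [show (θ + Real.pi) / 2 = θ / 2 + Real.pi / 2 by ring, Real.sin_add_pi_div_two]
  have hcosθ : Real.cos θ = 1 - 2 * Real.sin (θ / 2) ^ 2 := by
    have hc := Real.cos_two_mul (θ / 2)
    have hs := Real.sin_sq_add_cos_sq (θ / 2)
    rw [show (2 : ℝ) * (θ / 2) = θ by ring] at hc
    linarith
  have hsinθ : Real.sin θ = 2 * Real.sin (θ / 2) * Real.cos (θ / 2) := by
    have := Real.sin_two_mul (θ / 2)
    rwa [show (2 : ℝ) * (θ / 2) = θ by ring] at this
  apply Complex.ext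
  · rw [Complex.sub_re, Complex.exp_ofReal_mul_I_re, Complex.one_re, Complex.re_ofReal_mul,
      Complex.exp_ofReal_mul_I_re, hc2, hcosθ]
    ring
  · rw [Complex.sub_im, Complex.exp_ofReal_mul_I_im, Complex.one_im, Complex.im_ofReal_mul,
      Complex.exp_ofReal_mul_I_im, hs2, hsinθ]
    ring

lemma arg_sub_rho (hρ : 0 < ρ) (h0 : 0 < θ) (hπ : θ < Real.pi) :
    ((ρ : ℂ) * Complex.exp ((θ : ℂ) * Complex.I) - (ρ : ℂ)).arg = (Real.pi + θ) / 2 := by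
  have h1 : (ρ : ℂ) * Complex.exp ((θ : ℂ) * Complex.I) - (ρ : ℂ)
      = (ρ : ℂ) * (Complex.exp ((θ : ℂ) * Complex.I) - 1) := by ring
  rw [h1, Complex.arg_real_mul _ hρ, exp_sub_one_eq h0 hπ]
  have hsin : 0 < 2 * Real.sin (θ / 2) := by
    have : 0 < Real.sin (θ / 2) :=
      Real.sin_pos_of_pos_of_lt_pi (by linarith) (by linarith [Real.pi_pos])
    linarith
  rw [Complex.arg_real_mul _ hsin, arg_exp_I (by linarith [Real.pi_pos]) (by linarith)]
  ring

lemma arg_sub_le_half (hρ : 0 < ρ) (h0 : 0 < θ) (hπ : θ < Real.pi) {a : ℝ} (ha : 0 < a) (haρ : a ≤ ρ) :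
    ((ρ : ℂ) * Complex.exp ((θ : ℂ) * Complex.I) - (a : ℂ)).arg ≤ (Real.pi + θ) / 2 := by
  have := arg_sub_le_of_le hρ h0 hπ haρ
  rwa [arg_sub_rho hρ h0 hπ] at this

end Ray


/-! ### Polynomial evaluation lemmas -/

lemma hasDerivAt_im {f : ℝ → ℂ} {f' : ℂ} {x : ℝ} (hf : HasDerivAt f f' x) :
    HasDerivAt (fun y => (f y).im) f'.im x := by
  simpa [Function.comp_def] using (Complex.imCLM.hasFDerivAt.comp x hf.hasFDerivAt).hasDerivAt

lemma aeval_prod_X_sub_C (s : Finset ℤ) (f : ℤ → ℝ) (t : ℂ) :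
    Polynomial.aeval t (∏ k ∈ s, (Polynomial.X - Polynomial.C (f k)))
      = ∏ k ∈ s, (t - (f k : ℂ)) := by
  rw [map_prod]
  exact Finset.prod_congr rfl fun k _ => by simp

lemma prod_sub_ne_zero {s : Finset ℤ} {f : ℤ → ℝ} {t : ℂ} (h : t.im ≠ 0) :
    ∏ k ∈ s, (t - (f k : ℂ)) ≠ 0 := by
  apply Finset.prod_ne_zero_iff.2
  intro k _ hk
  rw [sub_eq_zero] at hk
  apply h
  rw [hk]
  simp

lemma prod_rep (s : Finset ℤ) (f : ℤ → ℝ) (t : ℂ) :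
    ∏ k ∈ s, (t - (f k : ℂ))
      = ((∏ k ∈ s, ‖t - (f k : ℂ)‖) : ℝ)
        * Complex.exp (((∑ k ∈ s, (t - (f k : ℂ)).arg) : ℝ) * Complex.I) := by
  push_cast
  rw [Finset.sum_mul, Complex.exp_sum, ← Finset.prod_mul_distrib]
  exact Finset.prod_congr rfl fun k _ => (Complex.norm_mul_exp_arg_mul_I _).symm

lemma cval_derivative_prod (s : Finset ℤ) (f : ℤ → ℝ) (t : ℂ) :
    Polynomial.aeval t (Polynomial.derivative (∏ k ∈ s, (Polynomial.X - Polynomial.C (f k))))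
      = ∑ k ∈ s, ∏ j ∈ s.erase k, (t - (f j : ℂ)) := by
  induction s using Finset.induction_on with
  | empty => simp
  | @insert a s ha ih =>
    rw [Finset.prod_insert ha, Polynomial.derivative_mul, Polynomial.derivative_X_sub_C,
      one_mul, map_add, map_mul, ih, aeval_prod_X_sub_C, Finset.sum_insert ha,
      Finset.erase_insert ha]
    have haeval : Polynomial.aeval t (Polynomial.X - Polynomial.C (f a)) = t - (f a : ℂ) := by
      simp
    rw [haeval]
    congr 1
    rw [Finset.mul_sum]
    apply Finset.sum_congr rfl
    intro k hk
    have hka : k ≠ a := fun h => ha (h ▸ hk)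
    rw [Finset.erase_insert_of_ne hka.symm,
      Finset.prod_insert (fun h => ha (Finset.mem_of_mem_erase h))]

lemma logderiv_eq {s : Finset ℤ} {f : ℤ → ℝ} {t : ℂ} (h : t.im ≠ 0) :
    Polynomial.aeval t (Polynomial.derivative (∏ k ∈ s, (Polynomial.X - Polynomial.C (f k))))
        / (∏ k ∈ s, (t - (f k : ℂ)))
      = ∑ k ∈ s, (t - (f k : ℂ))⁻¹ := by
  rw [cval_derivative_prod, Finset.sum_div]
  apply Finset.sum_congr rfl
  intro k hk
  have herase : ∏ j ∈ s.erase k, (t - (f j : ℂ)) ≠ 0 := prod_sub_ne_zero h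
  have hprod : ∏ j ∈ s, (t - (f j : ℂ))
      = (∏ j ∈ s.erase k, (t - (f j : ℂ))) * (t - (f k : ℂ)) :=
    (Finset.prod_erase_mul s _ hk).symm
  rw [hprod, div_mul_cancel_left₀ herase]


/-! ### Representation of F -/

lemma abs_exp_I (θ : ℝ) : ‖Complex.exp ((θ : ℂ) * Complex.I)‖ = 1 := by
  rw [Complex.norm_exp]
  simp

set_option maxHeartbeats 2000000 in
lemma F_rep (r pm pp qm qp : ℕ) (τ γ : ℤ → ℝ) (t : ℂ) (him : 0 < t.im) :
    ∃ M : ℝ, 0 < M ∧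
      cval (prodPoly pm pp τ) t / (t ^ r * cval (prodPoly qm qp γ) t)
        = ((M : ℝ) : ℂ) * Complex.exp
            (((angleSum pm pp qm qp τ γ t - r * t.arg : ℝ) : ℂ) * Complex.I) := by
  have ht0 : t ≠ 0 := fun h => by simp [h] at him
  have himne : t.im ≠ 0 := ne_of_gt him
  have hρ : 0 < ‖t‖ := norm_pos_iff.2 ht0
  set sP := Finset.Ioc (-(pm : ℤ)) (pp : ℤ) with hsP
  set sQ := Finset.Ioc (-(qm : ℤ)) (qp : ℤ) with hsQ
  set A := ∏ k ∈ sP, ‖t - (τ k : ℂ)‖ with hA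
  set B := ∏ k ∈ sQ, ‖t - (γ k : ℂ)‖ with hB
  set α := ∑ k ∈ sP, (t - (τ k : ℂ)).arg with hα
  set β := ∑ k ∈ sQ, (t - (γ k : ℂ)).arg with hβ
  have hfac : ∀ a : ℝ, t - (a : ℂ) ≠ 0 := by
    intro a h
    rw [sub_eq_zero] at h
    apply himne
    rw [h]
    simp
  have hApos : 0 < A := Finset.prod_pos fun k _ => norm_pos_iff.2 (hfac _)
  have hBpos : 0 < B := Finset.prod_pos fun k _ => norm_pos_iff.2 (hfac _)
  have hP : cval (prodPoly pm pp τ) t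
      = ((A : ℝ) : ℂ) * Complex.exp (((α : ℝ) : ℂ) * Complex.I) := by
    unfold cval prodPoly
    rw [aeval_prod_X_sub_C]
    exact prod_rep _ _ _
  have hQ : cval (prodPoly qm qp γ) t
      = ((B : ℝ) : ℂ) * Complex.exp (((β : ℝ) : ℂ) * Complex.I) := by
    unfold cval prodPoly
    rw [aeval_prod_X_sub_C]
    exact prod_rep _ _ _
  have htr : t ^ r = ((‖t‖ ^ r : ℝ) : ℂ)
      * Complex.exp ((((r : ℝ) * t.arg : ℝ) : ℂ) * Complex.I) := by
    have h1 : ((r : ℕ) : ℂ) * ((t.arg : ℂ) * Complex.I)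
        = (((r : ℝ) * t.arg : ℝ) : ℂ) * Complex.I := by
      push_cast
      ring
    conv_lhs => rw [← Complex.norm_mul_exp_arg_mul_I t]
    rw [mul_pow, ← Complex.exp_nat_mul, h1, ← Complex.ofReal_pow]
  refine ⟨A / (‖t‖ ^ r * B), by positivity, ?_⟩
  rw [hP, hQ, htr]
  have hcomb : ((‖t‖ ^ r : ℝ) : ℂ) * Complex.exp ((((r : ℝ) * t.arg : ℝ) : ℂ) * Complex.I)
      * (((B : ℝ) : ℂ) * Complex.exp (((β : ℝ) : ℂ) * Complex.I))
      = (((‖t‖ ^ r * B : ℝ)) : ℂ)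
        * Complex.exp ((((r : ℝ) * t.arg + β : ℝ) : ℂ) * Complex.I) := by
    rw [show ((((r : ℝ) * t.arg + β : ℝ)) : ℂ) * Complex.I
        = (((r : ℝ) * t.arg : ℝ) : ℂ) * Complex.I + ((β : ℝ) : ℂ) * Complex.I by
      push_cast; ring, Complex.exp_add]
    push_cast
    ring
  rw [hcomb, mul_div_mul_comm, ← Complex.exp_sub, Complex.ofReal_div]
  congr 1
  congr 1
  have hangle : angleSum pm pp qm qp τ γ t = α - β := rfl
  rw [hangle]
  push_cast
  ring


/-! ### Pairing lemmas from (C1), (C2) -/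

lemma qp_add_two_le_pp {pm pp qm qp : ℕ} {τ γ : ℤ → ℝ}
    (hτneg : ∀ k ∈ Finset.Ioc (-(pm : ℤ)) (pp : ℤ), k ≤ 0 → τ k < 0)
    (hγneg : ∀ j ∈ Finset.Ioc (-(qm : ℤ)) (qp : ℤ), j ≤ 0 → γ j < 0)
    (hγpos : ∀ j ∈ Finset.Ioc (-(qm : ℤ)) (qp : ℤ), 1 ≤ j → 0 < γ j)
    (hC1a : ∀ x : ℝ, τ 2 ≤ x → nPos qm qp γ x + 2 ≤ nPos pm pp τ x) :
    qp + 2 ≤ pp := by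
  classical
  set Fs : Finset ℝ := insert (τ 2) ((Finset.Ioc (-(qm : ℤ)) (qp : ℤ)).image γ) with hFs
  have hne : Fs.Nonempty := ⟨τ 2, Finset.mem_insert_self _ _⟩
  set x := Fs.max' hne with hx
  have hx1 : τ 2 ≤ x := Finset.le_max' _ _ (Finset.mem_insert_self _ _)
  have hx2 : ∀ j ∈ Finset.Ioc (-(qm : ℤ)) (qp : ℤ), γ j ≤ x := fun j hj =>
    Finset.le_max' _ _ (Finset.mem_insert_of_mem (Finset.mem_image_of_mem γ hj))
  have hfull : nPos qm qp γ x = qp := by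
    unfold nPos
    have : (Finset.Ioc (-(qm : ℤ)) (qp : ℤ)).filter (fun k => 0 < γ k ∧ γ k ≤ x)
        = Finset.Ioc (0 : ℤ) (qp : ℤ) := by
      ext k
      simp only [Finset.mem_filter, Finset.mem_Ioc]
      constructor
      · rintro ⟨⟨h1, h2⟩, h3, h4⟩
        refine ⟨?_, h2⟩
        by_contra hk
        push_neg at hk
        have := hγneg k (Finset.mem_Ioc.2 ⟨h1, h2⟩) (by omega)
        linarith
      · rintro ⟨h1, h2⟩
        have hk : k ∈ Finset.Ioc (-(qm : ℤ)) (qp : ℤ) := Finset.mem_Ioc.2 ⟨by omega, h2⟩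
        exact ⟨Finset.mem_Ioc.1 hk, hγpos k hk (by omega), hx2 k hk⟩
    rw [this, Int.card_Ioc]
    omega
  have hup : nPos pm pp τ x ≤ pp := by
    unfold nPos
    have hsub : (Finset.Ioc (-(pm : ℤ)) (pp : ℤ)).filter (fun k => 0 < τ k ∧ τ k ≤ x)
        ⊆ Finset.Ioc (0 : ℤ) (pp : ℤ) := by
      intro k hk
      rw [Finset.mem_filter, Finset.mem_Ioc] at hk
      obtain ⟨⟨h1, h2⟩, h3, h4⟩ := hk
      refine Finset.mem_Ioc.2 ⟨?_, h2⟩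
      by_contra hk0
      push_neg at hk0
      have := hτneg k (Finset.mem_Ioc.2 ⟨h1, h2⟩) (by omega)
      linarith
    have hcard := Finset.card_le_card hsub
    rw [Int.card_Ioc] at hcard
    omega
  have := hC1a x hx1
  omega

lemma neg_pair {pm pp qm qp : ℕ} {τ γ : ℤ → ℝ} (hpp : 2 ≤ pp)
    (hτmono : ∀ j k : ℤ, j ∈ Finset.Ioc (-(pm : ℤ)) (pp : ℤ) →
      k ∈ Finset.Ioc (-(pm : ℤ)) (pp : ℤ) → j ≤ k → τ j ≤ τ k)
    (hτneg : ∀ k ∈ Finset.Ioc (-(pm : ℤ)) (pp : ℤ), k ≤ 0 → τ k < 0)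
    (hγmono : ∀ j k : ℤ, j ∈ Finset.Ioc (-(qm : ℤ)) (qp : ℤ) →
      k ∈ Finset.Ioc (-(qm : ℤ)) (qp : ℤ) → j ≤ k → γ j ≤ γ k)
    (hγpos : ∀ j ∈ Finset.Ioc (-(qm : ℤ)) (qp : ℤ), 1 ≤ j → 0 < γ j)
    (hC2 : ∀ x : ℝ, x < 0 → nNeg pm pp τ x ≤ nNeg qm qp γ x)
    (k : ℤ) (hk1 : -(pm : ℤ) < k) (hk0 : k ≤ 0) : -(qm : ℤ) < k ∧ τ k ≤ γ k := by
  classical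
  have hkmem : k ∈ Finset.Ioc (-(pm : ℤ)) (pp : ℤ) := Finset.mem_Ioc.2 ⟨hk1, by omega⟩
  have hτk : τ k < 0 := hτneg k hkmem hk0
  set x := τ k with hxdef
  have hPsub : Finset.Ioc (k - 1) (0 : ℤ)
      ⊆ (Finset.Ioc (-(pm : ℤ)) (pp : ℤ)).filter (fun k' => x ≤ τ k' ∧ τ k' < 0) := by
    intro k' hk'
    rw [Finset.mem_Ioc] at hk'
    have hk'mem : k' ∈ Finset.Ioc (-(pm : ℤ)) (pp : ℤ) := Finset.mem_Ioc.2 ⟨by omega, by omega⟩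
    exact Finset.mem_filter.2 ⟨hk'mem, hτmono k k' hkmem hk'mem (by omega),
      hτneg k' hk'mem (by omega)⟩
  have hPcard : (1 - k).toNat
      ≤ ((Finset.Ioc (-(pm : ℤ)) (pp : ℤ)).filter (fun k' => x ≤ τ k' ∧ τ k' < 0)).card := by
    have := Finset.card_le_card hPsub
    rwa [Int.card_Ioc, show (0 : ℤ) - (k - 1) = 1 - k by ring] at this
  have hC2x := hC2 x hτk
  unfold nNeg at hC2x
  have hQsub : (Finset.Ioc (-(qm : ℤ)) (qp : ℤ)).filter (fun j => x ≤ γ j ∧ γ j < 0)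
      ⊆ Finset.Ioc (-(qm : ℤ)) (0 : ℤ) := by
    intro j hj
    rw [Finset.mem_filter, Finset.mem_Ioc] at hj
    obtain ⟨⟨h1, h2⟩, h3, h4⟩ := hj
    refine Finset.mem_Ioc.2 ⟨h1, ?_⟩
    by_contra hj0
    push_neg at hj0
    have := hγpos j (Finset.mem_Ioc.2 ⟨h1, h2⟩) (by omega)
    linarith
  have hQcard : ((Finset.Ioc (-(qm : ℤ)) (qp : ℤ)).filter (fun j => x ≤ γ j ∧ γ j < 0)).card
      ≤ qm := by
    have := Finset.card_le_card hQsub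
    rw [Int.card_Ioc] at this
    omega
  have hq : -(qm : ℤ) < k := by omega
  refine ⟨hq, ?_⟩
  by_contra hlt
  push_neg at hlt
  have hkQmem : k ∈ Finset.Ioc (-(qm : ℤ)) (qp : ℤ) := Finset.mem_Ioc.2 ⟨hq, by omega⟩
  have hQsub2 : (Finset.Ioc (-(qm : ℤ)) (qp : ℤ)).filter (fun j => x ≤ γ j ∧ γ j < 0)
      ⊆ Finset.Ioc k (0 : ℤ) := by
    intro j hj
    rw [Finset.mem_filter, Finset.mem_Ioc] at hj
    obtain ⟨⟨h1, h2⟩, h3, h4⟩ := hj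
    have hjle : j ≤ 0 := by
      by_contra hj0
      push_neg at hj0
      have := hγpos j (Finset.mem_Ioc.2 ⟨h1, h2⟩) (by omega)
      linarith
    refine Finset.mem_Ioc.2 ⟨?_, hjle⟩
    by_contra hjk
    push_neg at hjk
    have := hγmono j k (Finset.mem_Ioc.2 ⟨h1, h2⟩) hkQmem hjk
    linarith
  have := Finset.card_le_card hQsub2
  rw [Int.card_Ioc] at this
  omega

lemma pos_pair {pm pp qm qp : ℕ} {τ γ : ℤ → ℝ} (hppqp : qp + 2 ≤ pp)
    (hτmono : ∀ j k : ℤ, j ∈ Finset.Ioc (-(pm : ℤ)) (pp : ℤ) →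
      k ∈ Finset.Ioc (-(pm : ℤ)) (pp : ℤ) → j ≤ k → τ j ≤ τ k)
    (hτneg : ∀ k ∈ Finset.Ioc (-(pm : ℤ)) (pp : ℤ), k ≤ 0 → τ k < 0)
    (hγmono : ∀ j k : ℤ, j ∈ Finset.Ioc (-(qm : ℤ)) (qp : ℤ) →
      k ∈ Finset.Ioc (-(qm : ℤ)) (qp : ℤ) → j ≤ k → γ j ≤ γ k)
    (hγpos : ∀ j ∈ Finset.Ioc (-(qm : ℤ)) (qp : ℤ), 1 ≤ j → 0 < γ j)
    (hC1a : ∀ x : ℝ, τ 2 ≤ x → nPos qm qp γ x + 2 ≤ nPos pm pp τ x)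
    (hC1b : ∀ x : ℝ, 0 < x → x ≤ τ 2 → nPos qm qp γ x = 0)
    (j : ℤ) (hj1 : 1 ≤ j) (hjqp : j ≤ (qp : ℤ)) : τ (j + 2) ≤ γ j := by
  classical
  have hjmem : j ∈ Finset.Ioc (-(qm : ℤ)) (qp : ℤ) := Finset.mem_Ioc.2 ⟨by omega, hjqp⟩
  set x := γ j with hxdef
  have hx0 : 0 < x := hγpos j hjmem hj1
  have hgt : τ 2 ≤ x := by
    by_contra hle
    push_neg at hle
    have h0 := hC1b x hx0 hle.le
    have : j ∈ (Finset.Ioc (-(qm : ℤ)) (qp : ℤ)).filter (fun i => 0 < γ i ∧ γ i ≤ x) :=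
      Finset.mem_filter.2 ⟨hjmem, hx0, le_refl _⟩
    unfold nPos at h0
    rw [Finset.card_eq_zero] at h0
    rw [h0] at this
    exact absurd this (Finset.notMem_empty j)
  have hmain := hC1a x hgt
  unfold nPos at hmain
  have hlow : j.toNat
      ≤ ((Finset.Ioc (-(qm : ℤ)) (qp : ℤ)).filter (fun i => 0 < γ i ∧ γ i ≤ x)).card := by
    have hsub : Finset.Ioc (0 : ℤ) j
        ⊆ (Finset.Ioc (-(qm : ℤ)) (qp : ℤ)).filter (fun i => 0 < γ i ∧ γ i ≤ x) := by
      intro i hi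
      rw [Finset.mem_Ioc] at hi
      have himem : i ∈ Finset.Ioc (-(qm : ℤ)) (qp : ℤ) := Finset.mem_Ioc.2 ⟨by omega, by omega⟩
      exact Finset.mem_filter.2 ⟨himem, hγpos i himem (by omega),
        hγmono i j himem hjmem (by omega)⟩
    have := Finset.card_le_card hsub
    rwa [Int.card_Ioc, show j - 0 = j by ring] at this
  by_contra hcon
  push_neg at hcon
  have hup : ((Finset.Ioc (-(pm : ℤ)) (pp : ℤ)).filter (fun k => 0 < τ k ∧ τ k ≤ x)).card
      ≤ (j + 1).toNat := by
    have hsub : (Finset.Ioc (-(pm : ℤ)) (pp : ℤ)).filter (fun k => 0 < τ k ∧ τ k ≤ x)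
        ⊆ Finset.Ioc (0 : ℤ) (j + 1) := by
      intro k hk
      rw [Finset.mem_filter, Finset.mem_Ioc] at hk
      obtain ⟨⟨h1, h2⟩, h3, h4⟩ := hk
      have hk1 : 0 < k := by
        by_contra hk0
        push_neg at hk0
        have := hτneg k (Finset.mem_Ioc.2 ⟨h1, h2⟩) (by omega)
        linarith
      refine Finset.mem_Ioc.2 ⟨hk1, ?_⟩
      by_contra hkj
      push_neg at hkj
      have hj2mem : j + 2 ∈ Finset.Ioc (-(pm : ℤ)) (pp : ℤ) := Finset.mem_Ioc.2 ⟨by omega, by omega⟩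
      have := hτmono (j + 2) k hj2mem (Finset.mem_Ioc.2 ⟨h1, h2⟩) (by omega)
      linarith
    have := Finset.card_le_card hsub
    rwa [Int.card_Ioc, show j + 1 - 0 = j + 1 by ring] at this
  omega


/-! ### The key angle bounds -/

lemma angle_bound {pm pp qm qp : ℕ} {τ γ : ℤ → ℝ} (hpp : 2 ≤ pp)
    (hnegpair : ∀ k : ℤ, -(pm : ℤ) < k → k ≤ 0 → -(qm : ℤ) < k ∧ τ k ≤ γ k)
    (hpospair : ∀ j : ℤ, 1 ≤ j → j ≤ (qp : ℤ) → τ (j + 2) ≤ γ j)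
    (hppqp : qp + 2 ≤ pp)
    {ρ θ : ℝ} (hρ : 0 < ρ) (h0 : 0 < θ) (hπ : θ < Real.pi) :
    angleSum pm pp qm qp τ γ ((ρ : ℂ) * Complex.exp ((θ : ℂ) * Complex.I))
      ≤ ((ρ : ℂ) * Complex.exp ((θ : ℂ) * Complex.I) - ((τ 1 : ℝ) : ℂ)).arg
        + ((ρ : ℂ) * Complex.exp ((θ : ℂ) * Complex.I) - ((τ 2 : ℝ) : ℂ)).arg
        + ((pp : ℝ) - qp - 2) * Real.pi := by
  classical
  set t : ℂ := (ρ : ℂ) * Complex.exp ((θ : ℂ) * Complex.I) with ht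
  have hdisj : ∀ a b c : ℤ, Disjoint (Finset.Ioc a b) (Finset.Ioc b c) := by
    intro a b c
    rw [Finset.disjoint_left]
    intro u hu hu'
    rw [Finset.mem_Ioc] at hu hu'
    omega
  -- split the P-sum
  have hPsplit : ∑ k ∈ Finset.Ioc (-(pm : ℤ)) (pp : ℤ), (t - ((τ k : ℝ) : ℂ)).arg
      = (∑ k ∈ Finset.Ioc (-(pm : ℤ)) (0 : ℤ), (t - ((τ k : ℝ) : ℂ)).arg)
        + ∑ k ∈ Finset.Ioc (0 : ℤ) (pp : ℤ), (t - ((τ k : ℝ) : ℂ)).arg := by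
    rw [← Finset.sum_union (hdisj _ _ _), Finset.Ioc_union_Ioc_eq_Ioc (by omega) (by omega)]
  have hQsplit : ∑ j ∈ Finset.Ioc (-(qm : ℤ)) (qp : ℤ), (t - ((γ j : ℝ) : ℂ)).arg
      = (∑ j ∈ Finset.Ioc (-(qm : ℤ)) (0 : ℤ), (t - ((γ j : ℝ) : ℂ)).arg)
        + ∑ j ∈ Finset.Ioc (0 : ℤ) (qp : ℤ), (t - ((γ j : ℝ) : ℂ)).arg := by
    rw [← Finset.sum_union (hdisj _ _ _), Finset.Ioc_union_Ioc_eq_Ioc (by omega) (by omega)]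
  -- negative part
  have hneg : ∑ k ∈ Finset.Ioc (-(pm : ℤ)) (0 : ℤ), (t - ((τ k : ℝ) : ℂ)).arg
      ≤ ∑ j ∈ Finset.Ioc (-(qm : ℤ)) (0 : ℤ), (t - ((γ j : ℝ) : ℂ)).arg := by
    calc ∑ k ∈ Finset.Ioc (-(pm : ℤ)) (0 : ℤ), (t - ((τ k : ℝ) : ℂ)).arg
        ≤ ∑ k ∈ Finset.Ioc (-(pm : ℤ)) (0 : ℤ), (t - ((γ k : ℝ) : ℂ)).arg := by
          apply Finset.sum_le_sum
          intro k hk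
          rw [Finset.mem_Ioc] at hk
          exact arg_sub_le_of_le hρ h0 hπ (hnegpair k hk.1 hk.2).2
      _ ≤ ∑ j ∈ Finset.Ioc (-(qm : ℤ)) (0 : ℤ), (t - ((γ j : ℝ) : ℂ)).arg := by
          apply Finset.sum_le_sum_of_subset_of_nonneg
          · intro k hk
            rw [Finset.mem_Ioc] at hk
            exact Finset.mem_Ioc.2 ⟨(hnegpair k hk.1 hk.2).1, hk.2⟩
          · intro j _ _
            exact (arg_sub_pos hρ h0 hπ (γ j)).le
  -- split the positive P part
  have h02 : Finset.Ioc (0 : ℤ) (pp : ℤ) = Finset.Ioc (0 : ℤ) 2 ∪ Finset.Ioc (2 : ℤ) (pp : ℤ) :=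
    (Finset.Ioc_union_Ioc_eq_Ioc (by omega) (by omega)).symm
  have h2qp : Finset.Ioc (2 : ℤ) (pp : ℤ)
      = Finset.Ioc (2 : ℤ) ((qp : ℤ) + 2) ∪ Finset.Ioc ((qp : ℤ) + 2) (pp : ℤ) :=
    (Finset.Ioc_union_Ioc_eq_Ioc (by omega) (by omega)).symm
  have h12 : Finset.Ioc (0 : ℤ) (2 : ℤ) = {1, 2} := by
    ext k
    simp only [Finset.mem_Ioc, Finset.mem_insert, Finset.mem_singleton]
    omega
  have hsum12 : ∑ k ∈ Finset.Ioc (0 : ℤ) (2 : ℤ), (t - ((τ k : ℝ) : ℂ)).arg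
      = (t - ((τ 1 : ℝ) : ℂ)).arg + (t - ((τ 2 : ℝ) : ℂ)).arg := by
    rw [h12]
    rw [Finset.sum_insert (by simp), Finset.sum_singleton]
  -- middle part reindex
  have hmid : ∑ k ∈ Finset.Ioc (2 : ℤ) ((qp : ℤ) + 2), (t - ((τ k : ℝ) : ℂ)).arg
      ≤ ∑ j ∈ Finset.Ioc (0 : ℤ) (qp : ℤ), (t - ((γ j : ℝ) : ℂ)).arg := by
    have hmap : Finset.Ioc (2 : ℤ) ((qp : ℤ) + 2)
        = (Finset.Ioc (0 : ℤ) (qp : ℤ)).map (addRightEmbedding 2) := by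
      rw [Finset.map_add_right_Ioc]
      norm_num
    rw [hmap, Finset.sum_map]
    apply Finset.sum_le_sum
    intro j hj
    rw [Finset.mem_Ioc] at hj
    have := hpospair j (by omega) hj.2
    simpa [addRightEmbedding] using arg_sub_le_of_le hρ h0 hπ this
  -- tail part
  have htail : ∑ k ∈ Finset.Ioc ((qp : ℤ) + 2) (pp : ℤ), (t - ((τ k : ℝ) : ℂ)).arg
      ≤ ((pp : ℝ) - qp - 2) * Real.pi := by
    calc ∑ k ∈ Finset.Ioc ((qp : ℤ) + 2) (pp : ℤ), (t - ((τ k : ℝ) : ℂ)).arg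
        ≤ (Finset.Ioc ((qp : ℤ) + 2) (pp : ℤ)).card • Real.pi := by
          apply Finset.sum_le_card_nsmul
          intro k _
          exact Complex.arg_le_pi _
      _ = ((pp : ℝ) - qp - 2) * Real.pi := by
          rw [Int.card_Ioc, nsmul_eq_mul]
          congr 1
          have : ((pp : ℤ) - ((qp : ℤ) + 2)).toNat = pp - (qp + 2) := by omega
          rw [this]
          push_cast [Nat.cast_sub (by omega : qp + 2 ≤ pp)]
          ring
  have hposP : ∑ k ∈ Finset.Ioc (0 : ℤ) (pp : ℤ), (t - ((τ k : ℝ) : ℂ)).arg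
      ≤ (t - ((τ 1 : ℝ) : ℂ)).arg + (t - ((τ 2 : ℝ) : ℂ)).arg
        + (∑ j ∈ Finset.Ioc (0 : ℤ) (qp : ℤ), (t - ((γ j : ℝ) : ℂ)).arg)
        + ((pp : ℝ) - qp - 2) * Real.pi := by
    rw [h02, Finset.sum_union (hdisj _ _ _), hsum12, h2qp, Finset.sum_union (hdisj _ _ _)]
    linarith
  have hang : angleSum pm pp qm qp τ γ t
      = (∑ k ∈ Finset.Ioc (-(pm : ℤ)) (pp : ℤ), (t - ((τ k : ℝ) : ℂ)).arg)
        - ∑ j ∈ Finset.Ioc (-(qm : ℤ)) (qp : ℤ), (t - ((γ j : ℝ) : ℂ)).arg := rfl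
  rw [hang, hPsplit, hQsplit]
  linarith

lemma S_lt_upper {r pm pp qm qp : ℕ} {τ γ : ℤ → ℝ} (hr : 1 ≤ r) (hpp : 2 ≤ pp)
    (hnegpair : ∀ k : ℤ, -(pm : ℤ) < k → k ≤ 0 → -(qm : ℤ) < k ∧ τ k ≤ γ k)
    (hpospair : ∀ j : ℤ, 1 ≤ j → j ≤ (qp : ℤ) → τ (j + 2) ≤ γ j)
    (hppqp : qp + 2 ≤ pp)
    {ρ θ : ℝ} (hρ : 0 < ρ) (h0 : 0 < θ) (hπ : θ < Real.pi) :
    angleSum pm pp qm qp τ γ ((ρ : ℂ) * Complex.exp ((θ : ℂ) * Complex.I)) - r * θ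
      < ((pp : ℝ) - qp) * Real.pi := by
  have hb := angle_bound hpp hnegpair hpospair hppqp hρ h0 hπ
  have h1 := arg_sub_lt_pi hρ h0 hπ (τ 1)
  have h2 := arg_sub_lt_pi hρ h0 hπ (τ 2)
  have hrθ : θ ≤ (r : ℝ) * θ := by
    have : (1 : ℝ) ≤ (r : ℝ) := by exact_mod_cast hr
    nlinarith
  nlinarith

lemma S_lt_level {r pm pp qm qp : ℕ} {τ γ : ℤ → ℝ} (hr : 2 ≤ r) (hpp : 2 ≤ pp)
    (hnegpair : ∀ k : ℤ, -(pm : ℤ) < k → k ≤ 0 → -(qm : ℤ) < k ∧ τ k ≤ γ k)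
    (hpospair : ∀ j : ℤ, 1 ≤ j → j ≤ (qp : ℤ) → τ (j + 2) ≤ γ j)
    (hppqp : qp + 2 ≤ pp)
    (hτ1 : 0 < τ 1) (hτ2 : 0 < τ 2) (hτ12 : τ 1 ≤ τ 2)
    {ρ θ : ℝ} (hρ : 0 < ρ) (h0 : 0 < θ) (hπ : θ < Real.pi) (hρ2 : τ 2 ≤ ρ) :
    angleSum pm pp qm qp τ γ ((ρ : ℂ) * Complex.exp ((θ : ℂ) * Complex.I)) - r * θ
      < ((pp : ℝ) - qp - 1) * Real.pi := by
  have hb := angle_bound hpp hnegpair hpospair hppqp hρ h0 hπ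
  have h1 := arg_sub_le_half hρ h0 hπ hτ1 (le_trans hτ12 hρ2)
  have h2 := arg_sub_le_half hρ h0 hπ hτ2 hρ2
  have hrθ : 2 * θ ≤ (r : ℝ) * θ := by
    have : (2 : ℝ) ≤ (r : ℝ) := by exact_mod_cast hr
    nlinarith
  nlinarith


/-! ### Derivative of the angle sum along a ray -/

lemma term_hasDerivAt {θ : ℝ} (h0 : 0 < θ) (hπ : θ < Real.pi) {x : ℝ} (hx : 0 < x) (a : ℝ) :
    HasDerivAt (fun ρ : ℝ => ((ρ : ℂ) * Complex.exp ((θ : ℂ) * Complex.I) - (a : ℂ)).arg)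
      ((((x : ℂ) * Complex.exp ((θ : ℂ) * Complex.I) - (a : ℂ))⁻¹
          * Complex.exp ((θ : ℂ) * Complex.I)).im) x := by
  set c : ℂ := Complex.exp ((θ : ℂ) * Complex.I) with hc
  have hmem : (x : ℂ) * c - (a : ℂ) ∈ Complex.slitPlane := by
    rw [Complex.mem_slitPlane_iff]
    right
    have := ray_sub_im_pos hx h0 hπ a
    rw [← hc] at this
    exact ne_of_gt this
  have hinner : HasDerivAt (fun z : ℂ => z * c - (a : ℂ)) c (x : ℂ) := by
    simpa using ((hasDerivAt_id ((x : ℝ) : ℂ)).mul_const c).sub_const (a : ℂ)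
  have houter := Complex.hasDerivAt_log hmem
  have hcomp := (houter.comp ((x : ℝ) : ℂ) hinner).comp_ofReal
  have him := hasDerivAt_im hcomp
  simpa only [Function.comp_def, Complex.log_im] using him

lemma sum_hasDerivAt (pm pp qm qp : ℕ) (τ γ : ℤ → ℝ) {θ : ℝ} (h0 : 0 < θ)
    (hπ : θ < Real.pi) {x : ℝ} (hx : 0 < x) :
    HasDerivAt (fun ρ : ℝ =>
        angleSum pm pp qm qp τ γ ((ρ : ℂ) * Complex.exp ((θ : ℂ) * Complex.I)))
      ((∑ k ∈ Finset.Ioc (-(pm : ℤ)) (pp : ℤ),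
          (((x : ℂ) * Complex.exp ((θ : ℂ) * Complex.I) - ((τ k : ℝ) : ℂ))⁻¹
            * Complex.exp ((θ : ℂ) * Complex.I)).im)
        - ∑ j ∈ Finset.Ioc (-(qm : ℤ)) (qp : ℤ),
          (((x : ℂ) * Complex.exp ((θ : ℂ) * Complex.I) - ((γ j : ℝ) : ℂ))⁻¹
            * Complex.exp ((θ : ℂ) * Complex.I)).im) x := by
  have hP : HasDerivAt (fun ρ : ℝ => ∑ k ∈ Finset.Ioc (-(pm : ℤ)) (pp : ℤ),
      ((ρ : ℂ) * Complex.exp ((θ : ℂ) * Complex.I) - ((τ k : ℝ) : ℂ)).arg) _ x :=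
    HasDerivAt.fun_sum (fun k _ => term_hasDerivAt h0 hπ hx (τ k))
  have hQ : HasDerivAt (fun ρ : ℝ => ∑ j ∈ Finset.Ioc (-(qm : ℤ)) (qp : ℤ),
      ((ρ : ℂ) * Complex.exp ((θ : ℂ) * Complex.I) - ((γ j : ℝ) : ℂ)).arg) _ x :=
    HasDerivAt.fun_sum (fun j _ => term_hasDerivAt h0 hπ hx (γ j))
  exact hP.sub hQ

lemma deriv_value (r pm pp qm qp : ℕ) (τ γ : ℤ → ℝ) {θ : ℝ} (h0 : 0 < θ)
    (hπ : θ < Real.pi) {x : ℝ} (hx : 0 < x) :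
    (∑ k ∈ Finset.Ioc (-(pm : ℤ)) (pp : ℤ),
        (((x : ℂ) * Complex.exp ((θ : ℂ) * Complex.I) - ((τ k : ℝ) : ℂ))⁻¹
          * Complex.exp ((θ : ℂ) * Complex.I)).im)
      - (∑ j ∈ Finset.Ioc (-(qm : ℤ)) (qp : ℤ),
        (((x : ℂ) * Complex.exp ((θ : ℂ) * Complex.I) - ((γ j : ℝ) : ℂ))⁻¹
          * Complex.exp ((θ : ℂ) * Complex.I)).im)
      = -(Rfun r pm pp qm qp τ γ
            ((x : ℂ) * Complex.exp ((θ : ℂ) * Complex.I))).im / x := by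
  set c : ℂ := Complex.exp ((θ : ℂ) * Complex.I) with hc
  set t : ℂ := (x : ℂ) * c with htdef
  have him : t.im ≠ 0 := by
    rw [htdef, hc, ray_im']
    exact ne_of_gt (mul_pos hx (Real.sin_pos_of_pos_of_lt_pi h0 hπ))
  have hPne : cval (prodPoly pm pp τ) t ≠ 0 := by
    unfold cval prodPoly
    rw [aeval_prod_X_sub_C]
    exact prod_sub_ne_zero him
  have hQne : cval (prodPoly qm qp γ) t ≠ 0 := by
    unfold cval prodPoly
    rw [aeval_prod_X_sub_C]
    exact prod_sub_ne_zero him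
  have hlogP : cval (Polynomial.derivative (prodPoly pm pp τ)) t / cval (prodPoly pm pp τ) t
      = ∑ k ∈ Finset.Ioc (-(pm : ℤ)) (pp : ℤ), (t - ((τ k : ℝ) : ℂ))⁻¹ := by
    unfold cval prodPoly
    rw [aeval_prod_X_sub_C]
    exact logderiv_eq him
  have hlogQ : cval (Polynomial.derivative (prodPoly qm qp γ)) t / cval (prodPoly qm qp γ) t
      = ∑ j ∈ Finset.Ioc (-(qm : ℤ)) (qp : ℤ), (t - ((γ j : ℝ) : ℂ))⁻¹ := by
    unfold cval prodPoly
    rw [aeval_prod_X_sub_C]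
    exact logderiv_eq him
  have hPterm : (t * cval (Polynomial.derivative (prodPoly pm pp τ)) t
        / cval (prodPoly pm pp τ) t).im
      = x * ∑ k ∈ Finset.Ioc (-(pm : ℤ)) (pp : ℤ), ((t - ((τ k : ℝ) : ℂ))⁻¹ * c).im := by
    rw [mul_div_assoc, hlogP, Finset.mul_sum, Complex.im_sum, Finset.mul_sum]
    apply Finset.sum_congr rfl
    intro k _
    have ht' : t * (t - ((τ k : ℝ) : ℂ))⁻¹ = ((x : ℝ) : ℂ) * ((t - ((τ k : ℝ) : ℂ))⁻¹ * c) := by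
      rw [htdef]; ring
    rw [ht', Complex.im_ofReal_mul]
  have hQterm : (t * cval (Polynomial.derivative (prodPoly qm qp γ)) t
        / cval (prodPoly qm qp γ) t).im
      = x * ∑ j ∈ Finset.Ioc (-(qm : ℤ)) (qp : ℤ), ((t - ((γ j : ℝ) : ℂ))⁻¹ * c).im := by
    rw [mul_div_assoc, hlogQ, Finset.mul_sum, Complex.im_sum, Finset.mul_sum]
    apply Finset.sum_congr rfl
    intro j _
    have ht' : t * (t - ((γ j : ℝ) : ℂ))⁻¹ = ((x : ℝ) : ℂ) * ((t - ((γ j : ℝ) : ℂ))⁻¹ * c) := by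
      rw [htdef]; ring
    rw [ht', Complex.im_ofReal_mul]
  have hR : (Rfun r pm pp qm qp τ γ t).im
      = -(x * ∑ k ∈ Finset.Ioc (-(pm : ℤ)) (pp : ℤ), ((t - ((τ k : ℝ) : ℂ))⁻¹ * c).im)
        + x * ∑ j ∈ Finset.Ioc (-(qm : ℤ)) (qp : ℤ), ((t - ((γ j : ℝ) : ℂ))⁻¹ * c).im := by
    unfold Rfun
    rw [Complex.add_im, Complex.sub_im, Complex.natCast_im, hPterm, hQterm]
    ring
  rw [hR]
  field_simp
  ring

end Stmt10Aux

theorem stmt10 (r pm pp qm qp : ℕ) (hr : 2 ≤ r) (hpp : 2 ≤ pp) (τ γ : ℤ → ℝ)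
    (hτmono : ∀ j k : ℤ, j ∈ Finset.Ioc (-(pm : ℤ)) (pp : ℤ) →
      k ∈ Finset.Ioc (-(pm : ℤ)) (pp : ℤ) → j ≤ k → τ j ≤ τ k)
    (hτneg : ∀ k ∈ Finset.Ioc (-(pm : ℤ)) (pp : ℤ), k ≤ 0 → τ k < 0)
    (hτpos : ∀ k ∈ Finset.Ioc (-(pm : ℤ)) (pp : ℤ), 1 ≤ k → 0 < τ k)
    (hγmono : ∀ j k : ℤ, j ∈ Finset.Ioc (-(qm : ℤ)) (qp : ℤ) →
      k ∈ Finset.Ioc (-(qm : ℤ)) (qp : ℤ) → j ≤ k → γ j ≤ γ k)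
    (hγneg : ∀ j ∈ Finset.Ioc (-(qm : ℤ)) (qp : ℤ), j ≤ 0 → γ j < 0)
    (hγpos : ∀ j ∈ Finset.Ioc (-(qm : ℤ)) (qp : ℤ), 1 ≤ j → 0 < γ j)
    (hC1a : ∀ x : ℝ, τ 2 ≤ x → nPos qm qp γ x + 2 ≤ nPos pm pp τ x)
    (hC1b : ∀ x : ℝ, 0 < x → x ≤ τ 2 → nPos qm qp γ x = 0)
    (hC2 : ∀ x : ℝ, x < 0 → nNeg pm pp τ x ≤ nNeg qm qp γ x)
    (hC3 : ∀ t : ℂ, 0 < ‖t‖ → ‖t‖ < τ 2 → 0 < t.arg →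
      t.arg < Real.pi / r → 0 < (Rfun r pm pp qm qp τ γ t).im)
    (ta : ℝ) (hta0 : 0 < ta)
    (htaz : PRfun r pm pp qm qp τ γ (ta : ℂ) = 0)
    (htamin : ∀ x : ℝ, 0 < x → PRfun r pm pp qm qp τ γ (x : ℂ) = 0 → ta ≤ x)
    (hC4 : ∀ t : ℂ, 0 < ‖t‖ → ‖t‖ < ta → 0 < t.arg →
      t.arg < Real.pi → 0 < (Rfun r pm pp qm qp τ γ t).im)
    (tau : ℝ → ℝ)
    (htau : ∀ θ : ℝ, 0 < θ → θ < Real.pi / r → 0 < tau θ ∧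
      angleSum pm pp qm qp τ γ ((tau θ : ℂ) * Complex.exp ((θ : ℂ) * Complex.I)) - r * θ
        = ((pp : ℝ) - (qp : ℝ) - 1) * Real.pi)
 :
    ∀ t : ℂ, 0 < t.arg → t.arg < Real.pi / r → 0 < ‖t‖ →
      ‖t‖ ≤ tau t.arg →
      ((cval (prodPoly pm pp τ) t / (t ^ r * cval (prodPoly qm qp γ) t)).im = 0 ↔
        t = (tau t.arg : ℂ) * Complex.exp ((t.arg : ℂ) * Complex.I)) := by
  classical
  have hτ1mem : (1 : ℤ) ∈ Finset.Ioc (-(pm : ℤ)) (pp : ℤ) := Finset.mem_Ioc.2 ⟨by omega, by omega⟩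
  have hτ2mem : (2 : ℤ) ∈ Finset.Ioc (-(pm : ℤ)) (pp : ℤ) := Finset.mem_Ioc.2 ⟨by omega, by omega⟩
  have hτ1pos : 0 < τ 1 := hτpos 1 hτ1mem (by omega)
  have hτ2pos : 0 < τ 2 := hτpos 2 hτ2mem (by omega)
  have hτ12 : τ 1 ≤ τ 2 := hτmono 1 2 hτ1mem hτ2mem (by omega)
  have hppqp : qp + 2 ≤ pp := Stmt10Aux.qp_add_two_le_pp hτneg hγneg hγpos hC1a
  have hnegp : ∀ k : ℤ, -(pm : ℤ) < k → k ≤ 0 → -(qm : ℤ) < k ∧ τ k ≤ γ k :=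
    fun k h1 h2 => Stmt10Aux.neg_pair hpp hτmono hτneg hγmono hγpos hC2 k h1 h2
  have hposp : ∀ j : ℤ, 1 ≤ j → j ≤ (qp : ℤ) → τ (j + 2) ≤ γ j :=
    fun j h1 h2 => Stmt10Aux.pos_pair hppqp hτmono hτneg hγmono hγpos hC1a hC1b j h1 h2
  intro t harg hargr habs htle
  have hπr2 : Real.pi / r ≤ Real.pi / 2 := by
    rw [div_le_div_iff₀ (by positivity) (by norm_num)]
    have h2r : (2 : ℝ) ≤ (r : ℝ) := by exact_mod_cast hr
    nlinarith [Real.pi_pos]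
  set θ := t.arg with hθdef
  set ρ0 := ‖t‖ with hρ0def
  have hθπ : θ < Real.pi := lt_of_lt_of_le hargr (le_trans hπr2 (by linarith [Real.pi_pos]))
  have ht_eq : t = (ρ0 : ℂ) * Complex.exp ((θ : ℂ) * Complex.I) :=
    (Complex.norm_mul_exp_arg_mul_I t).symm
  have him : 0 < t.im := by
    rw [ht_eq, Stmt10Aux.ray_im']
    exact mul_pos habs (Real.sin_pos_of_pos_of_lt_pi harg hθπ)
  obtain ⟨htauθpos, htaueq⟩ := htau θ harg hargr
  have hτθτ2 : tau θ < τ 2 := by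
    by_contra hcon
    push_neg at hcon
    have hSlt := Stmt10Aux.S_lt_level hr hpp hnegp hposp hppqp hτ1pos hτ2pos hτ12
      htauθpos harg hθπ hcon
    rw [htaueq] at hSlt
    exact lt_irrefl _ hSlt
  obtain ⟨M, hM, hFt⟩ := Stmt10Aux.F_rep r pm pp qm qp τ γ t him
  constructor
  · intro hIm
    rw [hFt, Complex.im_ofReal_mul, Complex.exp_ofReal_mul_I_im] at hIm
    have hsin : Real.sin (angleSum pm pp qm qp τ γ t - r * θ) = 0 := by
      rcases mul_eq_zero.1 hIm with h | h
      · exact absurd h (ne_of_gt hM)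
      · exact h
    obtain ⟨n, hn⟩ := Real.sin_eq_zero_iff.1 hsin
    rcases eq_or_lt_of_le htle with heq | hlt
    · rw [ht_eq, heq]
    · exfalso
      have hderiv : ∀ y : ℝ, 0 < y → y < τ 2 →
          HasDerivAt (fun ρ : ℝ =>
              angleSum pm pp qm qp τ γ ((ρ : ℂ) * Complex.exp ((θ : ℂ) * Complex.I)))
            (-(Rfun r pm pp qm qp τ γ
                ((y : ℂ) * Complex.exp ((θ : ℂ) * Complex.I))).im / y) y := by
        intro y hy1 hy2
        have h1 := Stmt10Aux.sum_hasDerivAt pm pp qm qp τ γ harg hθπ hy1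
        rw [Stmt10Aux.deriv_value r pm pp qm qp τ γ harg hθπ hy1] at h1
        exact h1
      have hanti : StrictAntiOn (fun ρ : ℝ =>
          angleSum pm pp qm qp τ γ ((ρ : ℂ) * Complex.exp ((θ : ℂ) * Complex.I)))
          (Set.Icc ρ0 (tau θ)) := by
        apply strictAntiOn_of_deriv_neg (convex_Icc _ _)
        · intro y hy
          rw [Set.mem_Icc] at hy
          exact (hderiv y (lt_of_lt_of_le habs hy.1)
            (lt_of_le_of_lt hy.2 hτθτ2)).continuousAt.continuousWithinAt
        · intro y hy
          rw [interior_Icc, Set.mem_Ioo] at hy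
          have hy1 : 0 < y := lt_trans habs hy.1
          have hy2 : y < τ 2 := lt_trans hy.2 hτθτ2
          rw [(hderiv y hy1 hy2).deriv]
          apply div_neg_of_neg_of_pos _ hy1
          rw [neg_lt, neg_zero]
          have habs' : ‖((y : ℝ) : ℂ) * Complex.exp ((θ : ℂ) * Complex.I)‖ = y := by
            rw [norm_mul, Complex.norm_real, Stmt10Aux.abs_exp_I, mul_one, Real.norm_eq_abs, abs_of_pos hy1]
          have harg' : ((y : ℂ) * Complex.exp ((θ : ℂ) * Complex.I)).arg = θ :=
            Stmt10Aux.ray_arg hy1 (by linarith [Real.pi_pos]) hθπ.le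
          apply hC3
          · rw [habs']; exact hy1
          · rw [habs']; exact hy2
          · rw [harg']; exact harg
          · rw [harg']; exact hargr
      have hlt2 := hanti (Set.mem_Icc.2 ⟨le_refl _, hlt.le⟩)
        (Set.mem_Icc.2 ⟨hlt.le, le_refl _⟩) hlt
      have hup := Stmt10Aux.S_lt_upper (show 1 ≤ r by omega) hpp hnegp hposp hppqp habs harg hθπ
      rw [ht_eq] at hn
      set m : ℤ := (pp : ℤ) - qp - 1 with hm
      have hmcast : ((pp : ℝ) - qp - 1) = (m : ℝ) := by rw [hm]; push_cast; ring
      have hm1cast : ((pp : ℝ) - qp) = ((m + 1 : ℤ) : ℝ) := by rw [hm]; push_cast; ring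
      have hlow : (m : ℝ) * Real.pi < (n : ℝ) * Real.pi := by
        rw [hn, ← hmcast, ← htaueq]
        simp only [sub_lt_sub_iff_right]
        exact hlt2
      have hupπ : (n : ℝ) * Real.pi < ((m + 1 : ℤ) : ℝ) * Real.pi := by
        rw [hn, ← hm1cast]
        exact hup
      have h1 : (m : ℝ) < (n : ℝ) := lt_of_mul_lt_mul_right hlow Real.pi_pos.le
      have h2 : (n : ℝ) < ((m + 1 : ℤ) : ℝ) := lt_of_mul_lt_mul_right hupπ Real.pi_pos.le
      have h1' : m < n := by exact_mod_cast h1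
      have h2' : n < m + 1 := by exact_mod_cast h2
      omega
  · intro hteq
    rw [hFt, Complex.im_ofReal_mul, Complex.exp_ofReal_mul_I_im]
    have hS : angleSum pm pp qm qp τ γ t - r * θ = ((pp : ℝ) - qp - 1) * Real.pi := by
      rw [hteq]
      exact htaueq
    rw [hS, show ((pp : ℝ) - qp - 1) = (((pp : ℤ) - qp - 1 : ℤ) : ℝ) by push_cast; ring,
      Real.sin_int_mul_pi, mul_zero]
end
end

section
/- Suppose n_+^Q(x) = 0 for all x ∈ (0,τ_2] and Im R(t) > 0 on the sector {t : 0<|t|<τ_2, 0<Arg t<π/r}. Then R'(t) = Σ_{-p_-<k≤p_+} τ_k/(t-τ_k)² - Σ_{-q_-<j≤q_+} γ_j/(t-γ_j)² ≥ 0 for every real t ∈ [0,τ_2) with t ≠ τ_1. -/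
noncomputable section

open Polynomial Complex Finset Filter Topology Complex Finset Filter Topology

lemma myDerivProd {R : Type*} [CommSemiring R] (s : Finset ℤ) (f : ℤ → R[X]) :
    derivative (∏ k ∈ s, f k) = ∑ k ∈ s, (∏ j ∈ s.erase k, f j) * derivative (f k) := by
  classical
  induction s using Finset.induction_on with
  | empty => simp
  | @insert a s ha ih =>
    rw [Finset.prod_insert ha, derivative_mul, Finset.sum_insert ha, Finset.erase_insert ha, ih,
      Finset.mul_sum, mul_comm (derivative (f a))]
    congr 1
    refine Finset.sum_congr rfl fun k hk => ?_
    rw [Finset.erase_insert_of_ne (by rintro rfl; exact ha hk),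
      Finset.prod_insert (fun h => ha (Finset.mem_of_mem_erase h))]
    ring

lemma myAeval_prod {A : Type*} [CommRing A] [Algebra ℝ A] (s : Finset ℤ) (τ : ℤ → ℝ) (z : A) :
    aeval z (∏ k ∈ s, (X - C (τ k))) = ∏ k ∈ s, (z - algebraMap ℝ A (τ k)) := by
  rw [map_prod]; simp

lemma myAeval_deriv {A : Type*} [CommRing A] [Algebra ℝ A] (s : Finset ℤ) (τ : ℤ → ℝ) (z : A) :
    aeval z (derivative (∏ k ∈ s, (X - C (τ k)))) =
      ∑ k ∈ s, ∏ j ∈ s.erase k, (z - algebraMap ℝ A (τ j)) := by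
  rw [myDerivProd]
  simp [map_sum, map_prod]

lemma myQuot {A : Type*} [Field A] [Algebra ℝ A] (s : Finset ℤ) (τ : ℤ → ℝ) (z : A)
    (h : ∀ k ∈ s, z - algebraMap ℝ A (τ k) ≠ 0) :
    z * aeval z (derivative (∏ k ∈ s, (X - C (τ k)))) / aeval z (∏ k ∈ s, (X - C (τ k)))
      = ∑ k ∈ s, z / (z - algebraMap ℝ A (τ k)) := by
  rw [myAeval_deriv, myAeval_prod, Finset.mul_sum, Finset.sum_div]
  refine Finset.sum_congr rfl fun k hk => ?_
  have hE : ∏ j ∈ s.erase k, (z - algebraMap ℝ A (τ j)) ≠ 0 :=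
    Finset.prod_ne_zero_iff.mpr fun j hj => h j (Finset.mem_of_mem_erase hj)
  rw [← Finset.mul_prod_erase s _ hk, mul_div_mul_right _ _ hE]

lemma myHasDerivAt_term {𝕜 : Type*} [NontriviallyNormedField 𝕜] (a t : 𝕜) (h : t - a ≠ 0) :
    HasDerivAt (fun z => z / (z - a)) (-a / (t - a) ^ 2) t := by
  have := (hasDerivAt_id t).div ((hasDerivAt_id t).sub_const a) h
  refine this.congr_deriv ?_
  simp only [id]; ring

lemma myHasDerivAt_sum {𝕜 : Type*} [NontriviallyNormedField 𝕜] (s : Finset ℤ) (a : ℤ → 𝕜)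
    (t : 𝕜) (h : ∀ k ∈ s, t - a k ≠ 0) :
    HasDerivAt (fun z => ∑ k ∈ s, z / (z - a k)) (∑ k ∈ s, -a k / (t - a k) ^ 2) t :=
  HasDerivAt.fun_sum fun k hk => myHasDerivAt_term (a k) t (h k hk)

lemma myArgPos {z : ℂ} (h : 0 < z.im) : 0 < z.arg := by
  rw [Complex.arg_of_im_pos h]
  refine Real.arccos_pos.mpr ?_
  have h1 : |z.re| < ‖z‖ := Complex.abs_re_lt_norm.mpr h.ne'
  have h2 : (0 : ℝ) < ‖z‖ := lt_of_le_of_lt (abs_nonneg _) h1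
  rw [div_lt_one h2]
  exact lt_of_le_of_lt (le_abs_self _) h1


theorem stmt18 (r pm pp qm qp : ℕ) (hr : 2 ≤ r) (hpp : 2 ≤ pp) (τ γ : ℤ → ℝ)
    (hτmono : ∀ j k : ℤ, j ∈ Finset.Ioc (-(pm : ℤ)) (pp : ℤ) →
      k ∈ Finset.Ioc (-(pm : ℤ)) (pp : ℤ) → j ≤ k → τ j ≤ τ k)
    (hτneg : ∀ k ∈ Finset.Ioc (-(pm : ℤ)) (pp : ℤ), k ≤ 0 → τ k < 0)
    (hτpos : ∀ k ∈ Finset.Ioc (-(pm : ℤ)) (pp : ℤ), 1 ≤ k → 0 < τ k)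
    (hγmono : ∀ j k : ℤ, j ∈ Finset.Ioc (-(qm : ℤ)) (qp : ℤ) →
      k ∈ Finset.Ioc (-(qm : ℤ)) (qp : ℤ) → j ≤ k → γ j ≤ γ k)
    (hγneg : ∀ j ∈ Finset.Ioc (-(qm : ℤ)) (qp : ℤ), j ≤ 0 → γ j < 0)
    (hγpos : ∀ j ∈ Finset.Ioc (-(qm : ℤ)) (qp : ℤ), 1 ≤ j → 0 < γ j)
    (hQno : ∀ x : ℝ, 0 < x → x ≤ τ 2 → nPos qm qp γ x = 0)
    (hC3 : ∀ t : ℂ, 0 < ‖t‖ → ‖t‖ < τ 2 → 0 < t.arg →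
      t.arg < Real.pi / r → 0 < (Rfun r pm pp qm qp τ γ t).im)
 :
    ∀ t : ℝ, 0 ≤ t → t < τ 2 → t ≠ τ 1 →
      HasDerivAt (fun x : ℝ => (r : ℝ)
          - x * Polynomial.eval x (Polynomial.derivative (prodPoly pm pp τ))
              / Polynomial.eval x (prodPoly pm pp τ)
          + x * Polynomial.eval x (Polynomial.derivative (prodPoly qm qp γ))
              / Polynomial.eval x (prodPoly qm qp γ))
        ((∑ k ∈ Finset.Ioc (-(pm : ℤ)) (pp : ℤ), τ k / (t - τ k) ^ 2)
          - ∑ j ∈ Finset.Ioc (-(qm : ℤ)) (qp : ℤ), γ j / (t - γ j) ^ 2) t ∧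
      0 ≤ (∑ k ∈ Finset.Ioc (-(pm : ℤ)) (pp : ℤ), τ k / (t - τ k) ^ 2)
          - ∑ j ∈ Finset.Ioc (-(qm : ℤ)) (qp : ℤ), γ j / (t - γ j) ^ 2 := by
  intro t ht0 ht2 ht1
  classical
  set SP := Finset.Ioc (-(pm : ℤ)) (pp : ℤ) with hSP
  set SQ := Finset.Ioc (-(qm : ℤ)) (qp : ℤ) with hSQ
  have h2S : (2 : ℤ) ∈ SP := by
    simp only [hSP, Finset.mem_Ioc]
    constructor
    · have : (0:ℤ) ≤ (pm:ℤ) := Int.ofNat_nonneg pm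
      omega
    · exact_mod_cast hpp
  have hτ2 : 0 < τ 2 := hτpos 2 h2S (by norm_num)
  have hneτ : ∀ k ∈ SP, t ≠ τ k := by
    intro k hk he
    rcases lt_or_ge k 1 with h | h
    · have := hτneg k hk (by omega); linarith
    rcases eq_or_lt_of_le h with h1 | h1
    · exact ht1 (h1 ▸ he)
    · have := hτmono 2 k h2S hk h1
      linarith
  have hγgt : ∀ j ∈ SQ, 1 ≤ j → τ 2 < γ j := by
    intro j hj h1
    by_contra hle
    push_neg at hle
    have h0 : 0 < γ j := hγpos j hj h1
    have hcard := hQno (τ 2) hτ2 le_rfl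
    rw [nPos, Finset.card_eq_zero] at hcard
    have : j ∈ (SQ.filter fun k => 0 < γ k ∧ γ k ≤ τ 2) :=
      Finset.mem_filter.mpr ⟨hj, h0, hle⟩
    rw [hcard] at this
    exact absurd this (Finset.notMem_empty j)
  have hneγ : ∀ j ∈ SQ, t ≠ γ j := by
    intro j hj he
    rcases lt_or_ge j 1 with h | h
    · have := hγneg j hj (by omega); linarith
    · have := hγgt j hj h; linarith
  have hsubτ : ∀ k ∈ SP, t - τ k ≠ 0 := fun k hk => sub_ne_zero.mpr (hneτ k hk)
  have hsubγ : ∀ j ∈ SQ, t - γ j ≠ 0 := fun j hj => sub_ne_zero.mpr (hneγ j hj)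
  set c : ℝ := (∑ k ∈ SP, τ k / (t - τ k) ^ 2) - ∑ j ∈ SQ, γ j / (t - γ j) ^ 2 with hc
  -- derivative of the simplified function
  have hdR : HasDerivAt
      (fun x : ℝ => (r : ℝ) - ∑ k ∈ SP, x / (x - τ k) + ∑ j ∈ SQ, x / (x - γ j)) c t := by
    have h1 := myHasDerivAt_sum SP τ t hsubτ
    have h2 := myHasDerivAt_sum SQ γ t hsubγ
    have h3 := ((hasDerivAt_const t (r : ℝ)).sub h1).add h2
    refine h3.congr_deriv ?_
    simp only [hc, neg_div, Finset.sum_neg_distrib]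
    ring
  -- eventual equality near t
  have hτev : ∀ᶠ x : ℝ in 𝓝 t, ∀ k ∈ SP, x - τ k ≠ 0 := by
    rw [eventually_all_finset]
    intro k hk
    filter_upwards [eventually_ne_nhds (hneτ k hk)] with x hx
    exact sub_ne_zero.mpr hx
  have hγev : ∀ᶠ x : ℝ in 𝓝 t, ∀ j ∈ SQ, x - γ j ≠ 0 := by
    rw [eventually_all_finset]
    intro j hj
    filter_upwards [eventually_ne_nhds (hneγ j hj)] with x hx
    exact sub_ne_zero.mpr hx
  have heq : (fun x : ℝ => (r : ℝ)
        - x * Polynomial.eval x (Polynomial.derivative (prodPoly pm pp τ))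
            / Polynomial.eval x (prodPoly pm pp τ)
        + x * Polynomial.eval x (Polynomial.derivative (prodPoly qm qp γ))
            / Polynomial.eval x (prodPoly qm qp γ))
      =ᶠ[𝓝 t] (fun x : ℝ => (r : ℝ) - ∑ k ∈ SP, x / (x - τ k) + ∑ j ∈ SQ, x / (x - γ j)) := by
    filter_upwards [hτev, hγev] with x hx hx'
    have e1 := myQuot SP τ (x : ℝ) (by simpa using hx)
    have e2 := myQuot SQ γ (x : ℝ) (by simpa using hx')
    simp only [Algebra.algebraMap_self, RingHom.id_apply, Polynomial.coe_aeval_eq_eval] at e1 e2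
    rw [prodPoly, prodPoly, ← hSP, ← hSQ, e1, e2]
  have hderiv : HasDerivAt (fun x : ℝ => (r : ℝ)
        - x * Polynomial.eval x (Polynomial.derivative (prodPoly pm pp τ))
            / Polynomial.eval x (prodPoly pm pp τ)
        + x * Polynomial.eval x (Polynomial.derivative (prodPoly qm qp γ))
            / Polynomial.eval x (prodPoly qm qp γ)) c t :=
    (heq.hasDerivAt_iff).mpr hdR
  refine ⟨hderiv, ?_⟩
  -- nonnegativity via the sector condition
  have hrpos : (0:ℝ) < r := by
    have : (2:ℝ) ≤ r := by exact_mod_cast hr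
    linarith
  set θ : ℝ := Real.pi / (2 * r) with hθ
  have hθpos : 0 < θ := by
    rw [hθ]; positivity
  have hr2 : (2:ℝ) ≤ r := by exact_mod_cast hr
  have hθltr : θ < Real.pi / r := by
    rw [hθ, div_lt_div_iff₀ (by positivity) hrpos]
    nlinarith [Real.pi_pos, hr2]
  have hθltpi : θ < Real.pi := by
    rw [hθ, div_lt_iff₀ (by positivity)]
    nlinarith [Real.pi_pos, hr2]
  have hsin : 0 < Real.sin θ := Real.sin_pos_of_pos_of_lt_pi hθpos hθltpi
  set u : ℂ := Complex.exp ((θ : ℂ) * Complex.I) with hu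
  have huform : u = (Real.cos θ : ℂ) + (Real.sin θ : ℂ) * Complex.I := by
    rw [hu, Complex.exp_mul_I, Complex.ofReal_cos, Complex.ofReal_sin]
  have huim : u.im = Real.sin θ := by
    rw [huform]; simp [Complex.sin_ofReal_re]
  have habsu : ‖u‖ = 1 := Complex.norm_exp_ofReal_mul_I θ
  set g : ℂ → ℂ := fun z => (r : ℂ) - ∑ k ∈ SP, z / (z - (τ k : ℂ))
      + ∑ j ∈ SQ, z / (z - (γ j : ℂ)) with hg
  have hsubτC : ∀ k ∈ SP, (t : ℂ) - (τ k : ℂ) ≠ 0 := by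
    intro k hk
    rw [← Complex.ofReal_sub]
    exact Complex.ofReal_ne_zero.mpr (hsubτ k hk)
  have hsubγC : ∀ j ∈ SQ, (t : ℂ) - (γ j : ℂ) ≠ 0 := by
    intro j hj
    rw [← Complex.ofReal_sub]
    exact Complex.ofReal_ne_zero.mpr (hsubγ j hj)
  have hgd : HasDerivAt g ((c : ℝ) : ℂ) (t : ℂ) := by
    have h1 := myHasDerivAt_sum SP (fun k => ((τ k : ℝ) : ℂ)) (t : ℂ) hsubτC
    have h2 := myHasDerivAt_sum SQ (fun j => ((γ j : ℝ) : ℂ)) (t : ℂ) hsubγC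
    have h3 := ((hasDerivAt_const (t : ℂ) (r : ℂ)).sub h1).add h2
    refine h3.congr_deriv ?_
    rw [hc]
    push_cast
    simp only [neg_div, Finset.sum_neg_distrib]
    ring
  have hpath : HasDerivAt (fun s : ℝ => (t : ℂ) + (s : ℂ) * u) u 0 := by
    have h0 : HasDerivAt (fun s : ℝ => ((s : ℝ) : ℂ)) 1 0 := by
      exact (hasDerivAt_id (0:ℝ)).ofReal_comp
    simpa using (h0.mul_const u).const_add (t : ℂ)
  have hF : HasDerivAt (fun s : ℝ => (g ((t : ℂ) + (s : ℂ) * u)).im) (c * Real.sin θ) 0 := by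
    have h1 : HasDerivAt (fun s : ℝ => g ((t : ℂ) + (s : ℂ) * u)) (u • ((c : ℝ) : ℂ)) 0 := by
      have := HasDerivAt.scomp_of_eq (x := (0 : ℝ)) hgd hpath (by simp)
      exact this
    have h2 := Complex.imCLM.hasFDerivAt.comp_hasDerivAt (x := (0 : ℝ)) h1
    refine h2.congr_deriv ?_
    simp [Complex.mul_im, huim]
    ring
  have hF0 : (g ((t : ℂ) + ((0:ℝ) : ℂ) * u)).im = 0 := by
    have he : g ((t : ℂ) + ((0 : ℝ) : ℂ) * u)
        = ((((r : ℝ) - ∑ k ∈ SP, t / (t - τ k) + ∑ j ∈ SQ, t / (t - γ j)) : ℝ) : ℂ) := by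
      simp only [hg, Complex.ofReal_zero, zero_mul, add_zero]
      push_cast
      ring
    simp only [he]
    exact Complex.ofReal_im _
  have hzim : ∀ s : ℝ, ((t : ℂ) + (s : ℂ) * u).im = s * Real.sin θ := by
    intro s
    simp [Complex.add_im, Complex.mul_im, huim]
  have hargev : ∀ᶠ s : ℝ in 𝓝[>] (0 : ℝ), ((t : ℂ) + (s : ℂ) * u).arg < Real.pi / r := by
    rcases eq_or_lt_of_le ht0 with h0 | h0
    · filter_upwards [self_mem_nhdsWithin] with s hs
      have hz : (t : ℂ) + (s : ℂ) * u = (s : ℂ) * u := by rw [← h0]; simp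
      rw [hz, Complex.arg_real_mul u hs]
      have hargu : u.arg = θ := by
        rw [hu, Complex.exp_mul_I]
        exact Complex.arg_cos_add_sin_mul_I
          ⟨by linarith [Real.pi_pos], le_of_lt hθltpi⟩
      rw [hargu]
      exact hθltr
    · have hcont : ContinuousAt Complex.arg (t : ℂ) :=
        Complex.continuousAt_arg (by rw [Complex.mem_slitPlane_iff]; left; simpa using h0)
      have hpathc : Tendsto (fun s : ℝ => (t : ℂ) + (s : ℂ) * u) (𝓝[>] (0:ℝ)) (𝓝 (t : ℂ)) := by
        have hco : Continuous (fun s : ℝ => (t : ℂ) + (s : ℂ) * u) :=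
          continuous_const.add (Complex.continuous_ofReal.mul continuous_const)
        exact (hco.tendsto' 0 _ (by simp)).mono_left nhdsWithin_le_nhds
      have htend := hcont.tendsto.comp hpathc
      rw [Complex.arg_ofReal_of_nonneg ht0] at htend
      exact htend.eventually_lt_const (div_pos Real.pi_pos hrpos)
  have hsmall : ∀ᶠ s : ℝ in 𝓝[>] (0 : ℝ), s < τ 2 - t :=
    ((tendsto_id (x := 𝓝 (0:ℝ))).eventually_lt_const
      (show (0:ℝ) < τ 2 - t by linarith)).filter_mono nhdsWithin_le_nhds
  have hpos : ∀ᶠ s : ℝ in 𝓝[>] (0 : ℝ), 0 < (g ((t : ℂ) + (s : ℂ) * u)).im := by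
    filter_upwards [self_mem_nhdsWithin, hsmall, hargev] with s hs hsm harg
    have him : 0 < ((t : ℂ) + (s : ℂ) * u).im := by
      rw [hzim]; exact mul_pos hs hsin
    set z : ℂ := (t : ℂ) + (s : ℂ) * u with hz
    have hz0 : z ≠ 0 := by
      intro h
      rw [h] at him
      simp at him
    have habsz : ‖z‖ < τ 2 := by
      calc ‖z‖ ≤ ‖(t : ℂ)‖ + ‖(s : ℂ) * u‖ :=
            norm_add_le _ _
        _ = t + s := by
            rw [norm_mul, habsu, Complex.norm_real, Complex.norm_real, Real.norm_eq_abs, Real.norm_eq_abs,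
              _root_.abs_of_nonneg ht0, _root_.abs_of_nonneg hs.le, mul_one]
        _ < τ 2 := by linarith
    have hR := hC3 z (norm_pos_iff.mpr hz0) habsz (myArgPos him) harg
    have hzsubτ : ∀ k ∈ SP, z - algebraMap ℝ ℂ (τ k) ≠ 0 := by
      intro k hk hzero
      have h1 : (z - algebraMap ℝ ℂ (τ k)).im = z.im := by
        simp [Complex.sub_im]
      rw [hzero] at h1
      simp at h1
      rw [← h1] at him
      exact lt_irrefl _ him
    have hzsubγ : ∀ j ∈ SQ, z - algebraMap ℝ ℂ (γ j) ≠ 0 := by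
      intro j hj hzero
      have h1 : (z - algebraMap ℝ ℂ (γ j)).im = z.im := by
        simp [Complex.sub_im]
      rw [hzero] at h1
      simp at h1
      rw [← h1] at him
      exact lt_irrefl _ him
    have e1 := myQuot SP τ z hzsubτ
    have e2 := myQuot SQ γ z hzsubγ
    simp only [Complex.coe_algebraMap] at e1 e2
    have hRg : Rfun r pm pp qm qp τ γ z = g z := by
      rw [Rfun, cval, cval, cval, cval, prodPoly, prodPoly, ← hSP, ← hSQ, e1, e2, hg]
    rw [← hRg]
    exact hR
  have hge : 0 ≤ c * Real.sin θ := by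
    have hslope := hasDerivAt_iff_tendsto_slope.mp hF
    have hmono : 𝓝[>] (0 : ℝ) ≤ 𝓝[≠] (0 : ℝ) :=
      nhdsWithin_mono _ fun x hx => ne_of_gt hx
    refine ge_of_tendsto (hslope.mono_left hmono) ?_
    filter_upwards [hpos, self_mem_nhdsWithin] with s hsp hs0
    simp only [slope_def_field, hF0, sub_zero]
    exact div_nonneg hsp.le hs0.le
  by_contra hcneg
  push_neg at hcneg
  nlinarith
end
end
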